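/- arXiv:1304.7804 — 3 statements merged into one kernel-verified Lean document; each statement's English description precedes it below -/
import Mathlib

section
/- If α and β are τ-stable assemblies that are consistent (they agree on every position in dom α ∩ dom β) and dom α ∩ dom β ≠ ∅, then the assembly α ∪ β is τ-stable. -/
/-- A tile system over a type `T` of tile types: each tile type has, in each
direction (unit vector of `ℤ × ℤ`), a glue label (a natural number `ℕ`), and
each glue label has a nonnegative integer strength given by `str`. -/
structure TileSystem (T : Type) where
  glue : T → ℤ × ℤ → ℕ
  str : ℕ → ℕ

/-- The four unit-vector directions of `ℤ²`. -/
def dirs : Finset (ℤ × ℤ) := {(0,1), (0,-1), (1,0), (-1,0)}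

/-- An assembly: a partial function from `ℤ²` to tile types. -/
abbrev Assembly (T : Type) := ℤ × ℤ → Option T

/-- `D` is the domain of the assembly `α`. -/
def IsDom {T : Type} (α : Assembly T) (D : Finset (ℤ × ℤ)) : Prop :=
  ∀ p, (α p).isSome ↔ p ∈ D

/-- The strength of the bond between positions `p` and `q` in `α`: it is the
strength of the common glue if `q - p` is a unit direction and the glue of the
tile at `p` in direction `q - p` matches the glue of the tile at `q` in
direction `p - q`; otherwise `0`. -/
def bond {T : Type} (ts : TileSystem T) (α : Assembly T) (p q : ℤ × ℤ) : ℕ :=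
  match α p, α q with
  | some t, some t' =>
      if q - p ∈ dirs ∧ ts.glue t (q - p) = ts.glue t' (p - q)
      then ts.str (ts.glue t (q - p)) else 0
  | _, _ => 0

/-- Two positions of `α` interact if they hold tiles binding with positive strength. -/
def Interacts {T : Type} (ts : TileSystem T) (α : Assembly T) (p q : ℤ × ℤ) : Prop :=
  0 < bond ts α p q

/-- Total strength of the interacting glues between positions in `A` and
(adjacent) positions in `B`. -/
def strengthBetween {T : Type} (ts : TileSystem T) (α : Assembly T)
    (A B : Finset (ℤ × ℤ)) : ℕ :=
  ∑ p ∈ A, ∑ q ∈ B, bond ts α p q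

/-- `α` is `τ`-stable: every partition of its domain into two nonempty parts is
crossed by interacting glues of total strength at least `τ`. -/
def Stable {T : Type} (ts : TileSystem T) (α : Assembly T) (τ : ℕ) : Prop :=
  ∀ D A B : Finset (ℤ × ℤ), IsDom α D → A ∪ B = D → Disjoint A B →
    A.Nonempty → B.Nonempty → τ ≤ strengthBetween ts α A B

/-- The union of two assemblies (agreeing with `α` wherever `α` is defined). -/
def aunion {T : Type} (α β : Assembly T) : Assembly T :=
  fun p => match α p with
    | some t => some t
    | none => β p

/-- Producibility in the hierarchical model at temperature `τ`: an assembly is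
producible if it is a single tile, or the `τ`-stable union of two producible
assemblies with disjoint domains. -/
inductive Producible {T : Type} (ts : TileSystem T) (τ : ℕ) : Assembly T → Prop where
  | single (p : ℤ × ℤ) (t : T) :
      Producible ts τ (fun q => if q = p then some t else none)
  | union {α β : Assembly T} :
      Producible ts τ α → Producible ts τ β →
      (∀ p, α p = none ∨ β p = none) →
      Stable ts (aunion α β) τ →
      Producible ts τ (aunion α β)

/-- Two assemblies are consistent if they agree wherever both are defined. -/
def Consistent {T : Type} (α β : Assembly T) : Prop :=
  ∀ p t t', α p = some t → β p = some t' → t = t'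

/-- `α` is a subassembly of `β`. -/
def Subassembly {T : Type} (α β : Assembly T) : Prop :=
  ∀ p t, α p = some t → β p = some t

/-- A producible assembly is terminal if no producible assembly can stably attach to it. -/
def Terminal {T : Type} (ts : TileSystem T) (τ : ℕ) (α : Assembly T) : Prop :=
  ∀ β : Assembly T, Producible ts τ β → (∀ p, α p = none ∨ β p = none) →
    ¬ Stable ts (aunion α β) τ

/-- The hierarchical system uniquely produces `α` if the set of producible
terminal assemblies equals `{α}`. -/
def UniquelyProduces {T : Type} (ts : TileSystem T) (τ : ℕ) (α : Assembly T) : Prop :=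
  {γ : Assembly T | Producible ts τ γ ∧ Terminal ts τ γ} = {α}

/-- `𝒞` is a partition of the finite set `D`: pairwise disjoint nonempty parts
whose union is `D`. -/
def IsPartition (𝒞 : Finset (Finset (ℤ × ℤ))) (D : Finset (ℤ × ℤ)) : Prop :=
  (∀ C ∈ 𝒞, C.Nonempty) ∧
  (∀ C₁ ∈ 𝒞, ∀ C₂ ∈ 𝒞, C₁ ≠ C₂ → Disjoint C₁ C₂) ∧
  𝒞.sup id = D

/-! A cut of `dom (α ∪ β) = dom α ∪ dom β` into two nonempty parts also cuts `dom α` or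
`dom β`: the side containing a common point meets both domains, and the other side meets at
least one.
The cut it induces on that domain is a cut of a stable assembly on which `α ∪ β` agrees with it,
and enlarging the two sides can only add strength. -/

section Assembly

variable {T : Type}

theorem IsDom.unique {α : Assembly T} {D D' : Finset (ℤ × ℤ)} (hD : IsDom α D)
    (hD' : IsDom α D') : D = D' := by
  ext p
  rw [← hD p, hD' p]

theorem aunion_apply_of_isSome {α : Assembly T} (β : Assembly T) {p : ℤ × ℤ}
    (hp : (α p).isSome) : aunion α β p = α p := by
  obtain ⟨t, ht⟩ := Option.isSome_iff_exists.mp hp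
  simp [aunion, ht]

theorem aunion_apply_of_consistent {α β : Assembly T} (hcons : Consistent α β) {p : ℤ × ℤ}
    (hp : (β p).isSome) : aunion α β p = β p := by
  obtain ⟨t', ht'⟩ := Option.isSome_iff_exists.mp hp
  cases ht : α p with
  | none => simp [aunion, ht]
  | some t => simp [aunion, ht, ht', hcons p t t' ht ht']

theorem isDom_aunion {α β : Assembly T} {Dα Dβ : Finset (ℤ × ℤ)} (hDα : IsDom α Dα)
    (hDβ : IsDom β Dβ) : IsDom (aunion α β) (Dα ∪ Dβ) := by
  intro p
  rw [Finset.mem_union, ← hDα p, ← hDβ p]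
  cases h : α p <;> simp [aunion, h]

theorem bond_congr (ts : TileSystem T) {γ δ : Assembly T} {p q : ℤ × ℤ}
    (hp : γ p = δ p) (hq : γ q = δ q) : bond ts γ p q = bond ts δ p q := by
  unfold bond
  rw [hp, hq]

theorem strengthBetween_congr (ts : TileSystem T) {γ δ : Assembly T} {A B : Finset (ℤ × ℤ)}
    (hA : ∀ p ∈ A, γ p = δ p) (hB : ∀ q ∈ B, γ q = δ q) :
    strengthBetween ts γ A B = strengthBetween ts δ A B :=
  Finset.sum_congr rfl fun p hp => Finset.sum_congr rfl fun q hq =>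
    bond_congr ts (hA p hp) (hB q hq)

theorem strengthBetween_mono (ts : TileSystem T) (γ : Assembly T) {A A' B B' : Finset (ℤ × ℤ)}
    (hA : A' ⊆ A) (hB : B' ⊆ B) : strengthBetween ts γ A' B' ≤ strengthBetween ts γ A B :=
  calc strengthBetween ts γ A' B' ≤ ∑ p ∈ A', ∑ q ∈ B, bond ts γ p q :=
        Finset.sum_le_sum fun _ _ => Finset.sum_le_sum_of_subset hB
    _ ≤ strengthBetween ts γ A B := Finset.sum_le_sum_of_subset hA

theorem Stable.le_strengthBetween_of_eqOn {ts : TileSystem T} {γ δ : Assembly T} {τ : ℕ}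
    {Dγ A B : Finset (ℤ × ℤ)} (hγ : Stable ts γ τ) (hDγ : IsDom γ Dγ)
    (hδ : ∀ p ∈ Dγ, δ p = γ p) (hcover : Dγ ⊆ A ∪ B) (hAB : Disjoint A B)
    (hA : (A ∩ Dγ).Nonempty) (hB : (B ∩ Dγ).Nonempty) :
    τ ≤ strengthBetween ts δ A B := by
  have hcut : A ∩ Dγ ∪ B ∩ Dγ = Dγ := by
    rw [← Finset.union_inter_distrib_right, Finset.inter_eq_right.mpr hcover]
  calc τ ≤ strengthBetween ts γ (A ∩ Dγ) (B ∩ Dγ) :=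
        hγ Dγ _ _ hDγ hcut (hAB.mono Finset.inter_subset_left Finset.inter_subset_left) hA hB
    _ = strengthBetween ts δ (A ∩ Dγ) (B ∩ Dγ) :=
        strengthBetween_congr ts (fun p hp => (hδ p (Finset.mem_inter.mp hp).2).symm)
          (fun q hq => (hδ q (Finset.mem_inter.mp hq).2).symm)
    _ ≤ strengthBetween ts δ A B :=
        strengthBetween_mono ts δ Finset.inter_subset_left Finset.inter_subset_left

end Assembly

theorem Finset.cuts_left_or_cuts_right {ι : Type*} [DecidableEq ι] {X Y A B : Finset ι}
    (hXY : (X ∩ Y).Nonempty) (hAB : A ∪ B = X ∪ Y) (hA : A.Nonempty) (hB : B.Nonempty) :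
    ((A ∩ X).Nonempty ∧ (B ∩ X).Nonempty) ∨ ((A ∩ Y).Nonempty ∧ (B ∩ Y).Nonempty) := by
  obtain ⟨x, hx⟩ := hXY
  rw [Finset.mem_inter] at hx
  have hmeets : ∀ {C : Finset ι}, C.Nonempty → C ⊆ X ∪ Y →
      (C ∩ X).Nonempty ∨ (C ∩ Y).Nonempty := by
    rintro C ⟨c, hc⟩ hCXY
    rcases Finset.mem_union.mp (hCXY hc) with h | h
    exacts [.inl ⟨c, Finset.mem_inter.mpr ⟨hc, h⟩⟩, .inr ⟨c, Finset.mem_inter.mpr ⟨hc, h⟩⟩]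
  have hxAB : x ∈ A ∪ B := hAB ▸ Finset.mem_union_left Y hx.1
  rcases Finset.mem_union.mp hxAB with hxA | hxB
  · have hAX : (A ∩ X).Nonempty := ⟨x, Finset.mem_inter.mpr ⟨hxA, hx.1⟩⟩
    have hAY : (A ∩ Y).Nonempty := ⟨x, Finset.mem_inter.mpr ⟨hxA, hx.2⟩⟩
    rcases hmeets hB (hAB ▸ Finset.subset_union_right) with h | h
    exacts [.inl ⟨hAX, h⟩, .inr ⟨hAY, h⟩]
  · have hBX : (B ∩ X).Nonempty := ⟨x, Finset.mem_inter.mpr ⟨hxB, hx.1⟩⟩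
    have hBY : (B ∩ Y).Nonempty := ⟨x, Finset.mem_inter.mpr ⟨hxB, hx.2⟩⟩
    rcases hmeets hA (hAB ▸ Finset.subset_union_left) with h | h
    exacts [.inl ⟨h, hBX⟩, .inr ⟨h, hBY⟩]

theorem union_stable_general {T : Type} (ts : TileSystem T)
    (τ : ℕ) (α β : Assembly T)
    (Dα Dβ : Finset (ℤ × ℤ)) (hDα : IsDom α Dα) (hDβ : IsDom β Dβ)
    (hover : (Dα ∩ Dβ).Nonempty)
    (hcons : Consistent α β)
    (hsα : Stable ts α τ) (hsβ : Stable ts β τ) :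
    Stable ts (aunion α β) τ := by
  intro D A B hD hAB hdisj hA hB
  obtain rfl : Dα ∪ Dβ = D := (isDom_aunion hDα hDβ).unique hD
  have hcover : Dα ∪ Dβ ⊆ A ∪ B := hAB.ge
  rcases Finset.cuts_left_or_cuts_right hover hAB hA hB with ⟨hAα, hBα⟩ | ⟨hAβ, hBβ⟩
  · exact hsα.le_strengthBetween_of_eqOn hDα
      (fun p hp => aunion_apply_of_isSome β ((hDα p).mpr hp))
      (Finset.union_subset_left hcover) hdisj hAα hBα
  · exact hsβ.le_strengthBetween_of_eqOn hDβ
      (fun p hp => aunion_apply_of_consistent hcons ((hDβ p).mpr hp))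
      (Finset.union_subset_right hcover) hdisj hAβ hBβ

/-- If `α` and `β` are `τ`-stable assemblies that are
consistent and have overlapping domains, then `α ∪ β` is `τ`-stable. -/
theorem union_stable {T : Type} [Fintype T] (ts : TileSystem T)
    (τ : ℕ) (hτ : 0 < τ) (α β : Assembly T)
    (Dα Dβ : Finset (ℤ × ℤ)) (hDα : IsDom α Dα) (hDβ : IsDom β Dβ)
    (hover : (Dα ∩ Dβ).Nonempty)
    (hcons : Consistent α β)
    (hsα : Stable ts α τ) (hsβ : Stable ts β τ) :
    Stable ts (aunion α β) τ :=
  union_stable_general ts τ α β Dα Dβ hDα hDβ hover hcons hsα hsβ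
end

section
/- If α and β are assemblies producible at temperature τ in the hierarchical model, α and β are consistent (they agree on every position in dom α ∩ dom β), and dom α ∩ dom β ≠ ∅, then α → α ∪ β: there is a finite sequence of assemblies α = γ₀, γ₁, …, γ_k = α ∪ β such that for each i < k, γ_{i+1} is the τ-stable union of γ_i with some producible assembly whose domain is disjoint from dom γ_i. In other words, it is possible to assemble exactly α and then assemble the missing portions of β onto α by attachment of producible assemblies. -/
/-- One attachment step: `γ'` is the `τ`-stable union of `γ` with some
producible assembly whose domain is disjoint from that of `γ`. -/
def AttachStep {T : Type} (ts : TileSystem T) (τ : ℕ) (γ γ' : Assembly T) : Prop :=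
  ∃ δ : Assembly T, Producible ts τ δ ∧ (∀ p, γ p = none ∨ δ p = none) ∧
    Stable ts (aunion γ δ) τ ∧ γ' = aunion γ δ

/-!
Induct on the producibility of `β`, generalizing `α` to an arbitrary `τ`-stable assembly that is
consistent with `β` and shares a position with it. For `β = β₁ ∪ β₂` with `α` meeting `β₁`, the
induction hypothesis grows `α` into `α ∪ β₁`. If `α ∪ β₁` meets `β₂`, the induction hypothesis
applies again; otherwise `β₂` attaches to `α ∪ β₁` in one step. All of this rests on one fact:
the union of two consistent `τ`-stable assemblies that share a position is `τ`-stable, because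
every cut of the union splits one of the two parts nontrivially.
-/

def Overlaps {T : Type} (α β : Assembly T) : Prop :=
  ∃ p, (α p).isSome ∧ (β p).isSome

section Assembly

variable {T : Type} {α β γ : Assembly T}

lemma aunion_apply_of_eq_some {p : ℤ × ℤ} {t : T} (h : α p = some t) : aunion α β p = some t := by
  simp [aunion, h]

lemma aunion_apply_of_eq_none {p : ℤ × ℤ} (h : α p = none) : aunion α β p = β p := by
  simp [aunion, h]

lemma isSome_aunion (p : ℤ × ℤ) : (aunion α β p).isSome ↔ (α p).isSome ∨ (β p).isSome := by
  cases h : α p <;> simp [aunion, h]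

lemma aunion_assoc (α β γ : Assembly T) :
    aunion (aunion α β) γ = aunion α (aunion β γ) := by
  funext p
  cases hα : α p <;> cases hβ : β p <;> simp [aunion, hα, hβ]

lemma aunion_comm_of_disjoint (h : ∀ p, α p = none ∨ β p = none) : aunion α β = aunion β α := by
  funext p
  rcases h p with h | h <;> cases hα : α p <;> cases hβ : β p <;> simp_all [aunion]

lemma aunion_eq_left (h : ∀ p, (β p).isSome → (α p).isSome) : aunion α β = α := by
  funext p
  cases hα : α p with
  | some t => exact aunion_apply_of_eq_some hα
  | none => simpa [aunion_apply_of_eq_none hα, hα] using mt (h p)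

lemma subassembly_aunion_left (α β : Assembly T) : Subassembly α (aunion α β) :=
  fun _ _ h => aunion_apply_of_eq_some h

lemma subassembly_aunion_right (h : Consistent α β) : Subassembly β (aunion α β) := by
  intro p t hβ
  cases hα : α p with
  | none => rwa [aunion_apply_of_eq_none hα]
  | some t' => rw [aunion_apply_of_eq_some hα, h p t' t hα hβ]

lemma consistent_of_disjoint (h : ∀ p, α p = none ∨ β p = none) : Consistent α β := by
  intro p t t' hα hβ
  rcases h p with h | h <;> simp_all

lemma Subassembly.consistent (h : Subassembly α β) : Consistent α β :=
  fun p t _ hα hβ => Option.some.inj ((h p t hα).symm.trans hβ)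

lemma Consistent.mono_right (h : Consistent α β) (hγ : Subassembly γ β) : Consistent α γ :=
  fun p t t' hα hγp => h p t t' hα (hγ p t' hγp)

lemma Consistent.aunion_left (hα : Consistent α γ) (hβ : Consistent β γ) :
    Consistent (aunion α β) γ := by
  intro p t t' h hγ
  cases hαp : α p with
  | some s => rw [aunion_apply_of_eq_some hαp] at h; exact hα p t t' (hαp.trans h) hγ
  | none => rw [aunion_apply_of_eq_none hαp] at h; exact hβ p t t' h hγ

lemma Overlaps.mono {α' β' : Assembly T} (h : Overlaps α β) (hα : Subassembly α α')
    (hβ : Subassembly β β') : Overlaps α' β' := by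
  obtain ⟨p, hpα, hpβ⟩ := h
  obtain ⟨t, ht⟩ := Option.isSome_iff_exists.mp hpα
  obtain ⟨t', ht'⟩ := Option.isSome_iff_exists.mp hpβ
  exact ⟨p, by simp [hα p t ht], by simp [hβ p t' ht']⟩

lemma not_overlaps_iff : ¬ Overlaps α β ↔ ∀ p, α p = none ∨ β p = none := by
  simp [Overlaps, Option.isNone_iff_eq_none, imp_iff_not_or]

lemma isDom_filter (hα : Subassembly α γ) {D : Finset (ℤ × ℤ)} (hD : IsDom γ D) :
    IsDom α (D.filter fun p => (α p).isSome) := by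
  intro p
  rw [Finset.mem_filter, ← hD p, iff_and_self]
  intro h
  obtain ⟨t, ht⟩ := Option.isSome_iff_exists.mp h
  simp [hα p t ht]

end Assembly

lemma Finset.splits_of_mem_inter {ι : Type} [DecidableEq ι] {E F A B : Finset ι} {p : ι}
    (hEF : A ∪ B = E ∪ F) (hpE : p ∈ E) (hpF : p ∈ F) (hA : A.Nonempty) (hB : B.Nonempty) :
    ((A ∩ E).Nonempty ∧ (B ∩ E).Nonempty) ∨ ((A ∩ F).Nonempty ∧ (B ∩ F).Nonempty) := by
  obtain ⟨a, ha⟩ := hA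
  obtain ⟨b, hb⟩ := hB
  simp only [Finset.ext_iff, Finset.mem_union] at hEF
  simp only [Finset.Nonempty, Finset.mem_inter]
  grind

section Stability

variable {T : Type} {ts : TileSystem T} {τ : ℕ} {α β γ : Assembly T}

lemma bond_mono (h : Subassembly α γ) (p q : ℤ × ℤ) : bond ts α p q ≤ bond ts γ p q := by
  cases hp : α p with
  | none => simp [bond, hp]
  | some t =>
    cases hq : α q with
    | none => simp [bond, hp, hq]
    | some t' => rw [bond, bond, hp, hq, h p t hp, h q t' hq]

lemma strengthBetween_mono_s5 (h : Subassembly α γ) {A₁ B₁ A B : Finset (ℤ × ℤ)}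
    (hA : A₁ ⊆ A) (hB : B₁ ⊆ B) : strengthBetween ts α A₁ B₁ ≤ strengthBetween ts γ A B :=
  calc strengthBetween ts α A₁ B₁
      ≤ ∑ p ∈ A₁, ∑ q ∈ B₁, bond ts γ p q :=
        Finset.sum_le_sum fun p _ => Finset.sum_le_sum fun q _ => bond_mono h p q
    _ ≤ ∑ p ∈ A₁, ∑ q ∈ B, bond ts γ p q :=
        Finset.sum_le_sum fun _ _ => Finset.sum_le_sum_of_subset hB
    _ ≤ strengthBetween ts γ A B := Finset.sum_le_sum_of_subset hA

lemma Stable.le_strengthBetween (hα : Stable ts α τ) (hαγ : Subassembly α γ)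
    {E A B : Finset (ℤ × ℤ)} (hE : IsDom α E) (hEAB : E ⊆ A ∪ B) (hAB : Disjoint A B)
    (hA : (A ∩ E).Nonempty) (hB : (B ∩ E).Nonempty) : τ ≤ strengthBetween ts γ A B := by
  have hcut : A ∩ E ∪ B ∩ E = E := by
    rw [← Finset.union_inter_distrib_right, Finset.inter_eq_right.mpr hEAB]
  exact (hα E _ _ hE hcut (hAB.mono Finset.inter_subset_left Finset.inter_subset_left) hA hB).trans
    (strengthBetween_mono_s5 hαγ Finset.inter_subset_left Finset.inter_subset_left)

lemma Stable.aunion (hα : Stable ts α τ) (hβ : Stable ts β τ) (hcons : Consistent α β)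
    (hover : Overlaps α β) : Stable ts (aunion α β) τ := by
  intro D A B hD hAB hdisj hA hB
  obtain ⟨p, hpα, hpβ⟩ := hover
  have hDα := isDom_filter (subassembly_aunion_left α β) hD
  have hDβ := isDom_filter (subassembly_aunion_right hcons) hD
  have hcover : A ∪ B = (D.filter fun p => (α p).isSome) ∪ (D.filter fun p => (β p).isSome) := by
    ext q
    simp only [hAB, Finset.mem_union, Finset.mem_filter, ← hD q, isSome_aunion]
    tauto
  rcases Finset.splits_of_mem_inter hcover ((hDα p).mp hpα) ((hDβ p).mp hpβ) hA hB with
    ⟨hAα, hBα⟩ | ⟨hAβ, hBβ⟩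
  · exact hα.le_strengthBetween (subassembly_aunion_left α β) hDα
      (hcover ▸ Finset.subset_union_left) hdisj hAα hBα
  · exact hβ.le_strengthBetween (subassembly_aunion_right hcons) hDβ
      (hcover ▸ Finset.subset_union_right) hdisj hAβ hBβ

lemma stable_single (p : ℤ × ℤ) (t : T) :
    Stable ts (fun q => if q = p then some t else none) τ := by
  intro D A B hD hAB hdisj ⟨a, ha⟩ ⟨b, hb⟩
  have hD_eq (x : ℤ × ℤ) (hx : x ∈ D) : x = p := by
    by_contra h
    simpa [h] using (hD x).mpr hx
  have hab : a = b := (hD_eq a (hAB ▸ Finset.mem_union_left B ha)).trans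
    (hD_eq b (hAB ▸ Finset.mem_union_right A hb)).symm
  exact absurd (hab ▸ ha) (Finset.disjoint_left.mp hdisj · hb)

lemma Producible.stable (h : Producible ts τ α) : Stable ts α τ := by
  cases h with
  | single p t => exact stable_single p t
  | union _ _ _ hs => exact hs

end Stability

section Growth

variable {T : Type} {ts : TileSystem T} {τ : ℕ}

lemma Producible.reflTransGen_attachStep_aunion {β : Assembly T} (hβ : Producible ts τ β) :
    ∀ γ : Assembly T, Stable ts γ τ → Consistent γ β → Overlaps γ β →
      Relation.ReflTransGen (AttachStep ts τ) γ (aunion γ β) := by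
  induction hβ with
  | single p t =>
    intro γ _ _ ⟨q, hγq, hq⟩
    rw [aunion_eq_left]
    intro r hr
    have hrp : r = p := by by_contra h; simp [h] at hr
    have hqp : q = p := by by_contra h; simp [h] at hq
    rwa [hrp, ← hqp]
  | @union β₁ β₂ h₁ h₂ hd hs ih₁ ih₂ =>
    intro γ hγ hcons hover
    wlog hover₁ : Overlaps γ β₁ generalizing β₁ β₂ with H
    · rw [aunion_comm_of_disjoint hd] at hs hcons hover ⊢
      refine H h₂ h₁ (fun p => (hd p).symm) hs ih₂ ih₁ hcons hover ?_
      obtain ⟨p, hγp, hp⟩ := hover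
      exact ⟨p, hγp, ((isSome_aunion p).mp hp).resolve_right fun hp₁ => hover₁ ⟨p, hγp, hp₁⟩⟩
    have hβ₁ : Subassembly β₁ (aunion β₁ β₂) := subassembly_aunion_left β₁ β₂
    have hβ₂ : Subassembly β₂ (aunion β₁ β₂) := subassembly_aunion_right (consistent_of_disjoint hd)
    have hcons₁ : Consistent γ β₁ := hcons.mono_right hβ₁
    have hγ₁ : Stable ts (aunion γ β₁) τ := hγ.aunion h₁.stable hcons₁ hover₁
    have hcons₁₂ : Consistent (aunion γ β₁) β₂ := (hcons.aunion_left hβ₁.consistent).mono_right hβ₂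
    rw [← aunion_assoc]
    refine (ih₁ γ hγ hcons₁ hover₁).trans ?_
    by_cases hover₂ : Overlaps (aunion γ β₁) β₂
    · exact ih₂ _ hγ₁ hcons₁₂ hover₂
    · refine .single ⟨β₂, h₂, not_overlaps_iff.mp hover₂, ?_, rfl⟩
      rw [aunion_assoc]
      exact hγ.aunion hs hcons (hover₁.mono (fun _ _ h => h) hβ₁)

end Growth

theorem grows_to_union_general {T : Type} (ts : TileSystem T)
    (τ : ℕ) (α β : Assembly T)
    (hα : Producible ts τ α) (hβ : Producible ts τ β)
    (hcons : Consistent α β)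
    (hover : ∃ p, (α p).isSome ∧ (β p).isSome) :
    Relation.ReflTransGen (AttachStep ts τ) α (aunion α β) :=
  hβ.reflTransGen_attachStep_aunion α hα.stable hcons hover

/-- If `α` and `β` are producible at temperature `τ` in the
hierarchical model, consistent, and have overlapping domains, then `α → α ∪ β`:
there is a finite sequence of assemblies starting at `α` and ending at `α ∪ β`
in which each assembly is obtained from the previous one by the `τ`-stable
attachment of a producible assembly. -/
theorem grows_to_union {T : Type} [Fintype T] (ts : TileSystem T)
    (τ : ℕ) (hτ : 0 < τ) (α β : Assembly T)
    (hα : Producible ts τ α) (hβ : Producible ts τ β)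
    (hcons : Consistent α β)
    (hover : ∃ p, (α p).isSome ∧ (β p).isSome) :
    Relation.ReflTransGen (AttachStep ts τ) α (aunion α β) :=
  grows_to_union_general ts τ α β hα hβ hcons hover
end

section
/- Let T be a finite set of tile types with no functionally null glues, let 𝒯 = (T, σ, 1) be a seeded tile assembly system at temperature 1, and let α be a producible assembly of 𝒯. Then α is terminal if and only if for every position p ∈ dom α and every direction d with p + d ∉ dom α, the glue of α(p) in direction d has strength 0. -/
/-- Producibility in the seeded model with seed assembly `σ` at temperature `τ`:
an assembly is producible if it is the seed, or is obtained from a producible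
assembly by placing a single tile at an empty position adjacent to the assembly
such that the result is `τ`-stable. -/
inductive SProducible {T : Type} (ts : TileSystem T) (σ : Assembly T) (τ : ℕ) :
    Assembly T → Prop where
  | seed : SProducible ts σ τ σ
  | attach {α : Assembly T} (p : ℤ × ℤ) (t : T) :
      SProducible ts σ τ α →
      α p = none →
      (∃ d ∈ dirs, (α (p + d)).isSome) →
      Stable ts (Function.update α p (some t)) τ →
      SProducible ts σ τ (Function.update α p (some t))

/-- In the seeded model, `α` is terminal if no tile can be attached `τ`-stably to it. -/
def STerminal {T : Type} (ts : TileSystem T) (τ : ℕ) (α : Assembly T) : Prop :=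
  ∀ (p : ℤ × ℤ) (t : T), α p = none →
    ¬ ((∃ d ∈ dirs, (α (p + d)).isSome) ∧ Stable ts (Function.update α p (some t)) τ)

/-- The seeded system uniquely produces `α` if its set of producible terminal
assemblies equals `{α}`. -/
def SUniquelyProduces {T : Type} (ts : TileSystem T) (σ : Assembly T) (τ : ℕ)
    (α : Assembly T) : Prop :=
  {γ : Assembly T | SProducible ts σ τ γ ∧ STerminal ts τ γ} = {α}

/-- The binding graph of `α` is connected: any two positions of its domain are
joined by a path of interacting positions. -/
def BindingConnected {T : Type} (ts : TileSystem T) (α : Assembly T) : Prop :=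
  ∀ p q, (α p).isSome → (α q).isSome → Relation.ReflTransGen (Interacts ts α) p q

/-! At temperature 1 a single positive-strength bond makes an attachment stable. So if some
exposed side of `α` carries a positive glue, a tile presenting the matching glue on the opposite
side (one exists since no glue is functionally null) attaches there. Conversely, if every exposed
glue is null, a tile placed at an empty position binds to nothing, and the cut separating it from
the rest of the assembly has strength 0. -/

section TileAssembly

variable {T : Type} {ts : TileSystem T} {α : Assembly T}

def HasNullBoundary (ts : TileSystem T) (α : Assembly T) : Prop :=
  ∀ (p : ℤ × ℤ) (t : T) (d : ℤ × ℤ), α p = some t → d ∈ dirs →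
    α (p + d) = none → ts.str (ts.glue t d) = 0

lemma neg_mem_dirs {d : ℤ × ℤ} (h : d ∈ dirs) : -d ∈ dirs := by
  simp only [dirs, Finset.mem_insert, Finset.mem_singleton] at h ⊢
  rcases h with rfl | rfl | rfl | rfl <;> decide

lemma zero_notMem_dirs : (0 : ℤ × ℤ) ∉ dirs := by decide

lemma bond_of_some {p q : ℤ × ℤ} {t t' : T} (hp : α p = some t) (hq : α q = some t') :
    bond ts α p q = if q - p ∈ dirs ∧ ts.glue t (q - p) = ts.glue t' (p - q)
      then ts.str (ts.glue t (q - p)) else 0 := by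
  rw [bond, hp, hq]

lemma bond_comm (p q : ℤ × ℤ) : bond ts α p q = bond ts α q p := by
  cases hp : α p with
  | none => simp [bond, hp]
  | some t =>
    cases hq : α q with
    | none => simp [bond, hq]
    | some t' =>
      rw [bond_of_some hp hq, bond_of_some hq hp]
      have hneg : p - q = -(q - p) := (neg_sub q p).symm
      by_cases hd : q - p ∈ dirs
      · have hd' : p - q ∈ dirs := hneg ▸ neg_mem_dirs hd
        by_cases hg : ts.glue t (q - p) = ts.glue t' (p - q)
        · simp [hd, hd', hg]
        · simp [hd, hd', hg, Ne.symm hg]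
      · have hd' : p - q ∉ dirs := fun h => hd (neg_sub p q ▸ neg_mem_dirs h)
        simp [hd, hd']

lemma bond_self (p : ℤ × ℤ) : bond ts α p p = 0 := by
  cases h : α p <;> simp [bond, h, zero_notMem_dirs]

lemma strengthBetween_comm (A B : Finset (ℤ × ℤ)) :
    strengthBetween ts α A B = strengthBetween ts α B A := by
  rw [strengthBetween, strengthBetween, Finset.sum_comm]
  exact Finset.sum_congr rfl fun _ _ => Finset.sum_congr rfl fun _ _ => bond_comm _ _

lemma strengthBetween_mono_left {A A' : Finset (ℤ × ℤ)} (h : A ⊆ A') (B : Finset (ℤ × ℤ)) :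
    strengthBetween ts α A B ≤ strengthBetween ts α A' B :=
  Finset.sum_le_sum_of_subset h

lemma strengthBetween_update_of_notMem {q : ℤ × ℤ} (x : Option T) {A B : Finset (ℤ × ℤ)}
    (hA : q ∉ A) (hB : q ∉ B) :
    strengthBetween ts (Function.update α q x) A B = strengthBetween ts α A B := by
  refine Finset.sum_congr rfl fun a ha => Finset.sum_congr rfl fun b hb => ?_
  rw [bond, bond, Function.update_of_ne (ne_of_mem_of_not_mem ha hA),
    Function.update_of_ne (ne_of_mem_of_not_mem hb hB)]

lemma isDom_update_some {D : Finset (ℤ × ℤ)} (hD : IsDom α D) (p : ℤ × ℤ) (t : T) :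
    IsDom (Function.update α p (some t)) (insert p D) := by
  intro r
  by_cases h : r = p <;> simp [h, hD r]

lemma isDom_erase_of_update_some {D : Finset (ℤ × ℤ)} {q : ℤ × ℤ} {t : T}
    (hD : IsDom (Function.update α q (some t)) D) (hq : α q = none) :
    IsDom α (D.erase q) := by
  intro r
  by_cases h : r = q
  · subst h; simp [hq]
  · simp [← hD r, h]

/-- Either the new tile is alone in its part and its bond to `c` crosses the cut, or removing it
leaves a cut of the stable assembly `α`. -/
lemma one_le_strengthBetween_update {D A B : Finset (ℤ × ℤ)} {q c : ℤ × ℤ} {t : T}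
    (hα : Stable ts α 1) (hq : α q = none) (hc : (α c).isSome)
    (hbond : 0 < bond ts (Function.update α q (some t)) q c)
    (hD : IsDom (Function.update α q (some t)) D) (hAB : A ∪ B = D) (hdisj : Disjoint A B)
    (hqA : q ∈ A) (hB : B.Nonempty) :
    1 ≤ strengthBetween ts (Function.update α q (some t)) A B := by
  have hqB : q ∉ B := Finset.disjoint_left.mp hdisj hqA
  rcases (A.erase q).eq_empty_or_nonempty with hA' | hA'
  · have hAq : A = {q} := ((Finset.erase_eq_empty_iff A q).mp hA').resolve_left
      (Finset.ne_empty_of_mem hqA)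
    have hcq : c ≠ q := by rintro rfl; simp [hq] at hc
    have hcD : c ∈ D := (hD c).mp (by rwa [Function.update_of_ne hcq])
    have hcB : c ∈ B := by
      rw [← hAB, hAq] at hcD
      simpa [hcq] using hcD
    rw [strengthBetween, hAq, Finset.sum_singleton]
    exact hbond.trans_le (Finset.single_le_sum (fun _ _ => Nat.zero_le _) hcB)
  · have hdom : IsDom α ((A.erase q) ∪ B) := by
      rw [← Finset.erase_eq_of_notMem hqB, ← Finset.erase_union_distrib, hAB]
      exact isDom_erase_of_update_some hD hq
    calc 1 ≤ strengthBetween ts α (A.erase q) B :=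
          hα _ _ _ hdom rfl (Finset.disjoint_of_subset_left (Finset.erase_subset q A) hdisj) hA' hB
      _ = strengthBetween ts (Function.update α q (some t)) (A.erase q) B :=
          (strengthBetween_update_of_notMem _ (Finset.notMem_erase q A) hqB).symm
      _ ≤ _ := strengthBetween_mono_left (Finset.erase_subset q A) B

lemma stable_update_of_bond_pos (hα : Stable ts α 1) {q c : ℤ × ℤ} {t : T} (hq : α q = none)
    (hc : (α c).isSome) (hbond : 0 < bond ts (Function.update α q (some t)) q c) :
    Stable ts (Function.update α q (some t)) 1 := by
  intro D A B hD hAB hdisj hA hB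
  have hqD : q ∈ D := (hD q).mp (by simp)
  rcases Finset.mem_union.mp (hAB ▸ hqD) with hqA | hqB
  · exact one_le_strengthBetween_update hα hq hc hbond hD hAB hdisj hqA hB
  · rw [strengthBetween_comm]
    exact one_le_strengthBetween_update hα hq hc hbond hD
      ((Finset.union_comm B A).trans hAB) hdisj.symm hqB hA

lemma bond_update_of_glue_eq {p d : ℤ × ℤ} {t t' : T} (hp : α p = some t) (hd : d ∈ dirs)
    (hglue : ts.glue t' (-d) = ts.glue t d) :
    bond ts (Function.update α (p + d) (some t')) (p + d) p = ts.str (ts.glue t d) := by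
  have hne : p ≠ p + d := fun h => zero_notMem_dirs (left_eq_add.mp h ▸ hd)
  rw [bond_of_some (Function.update_self _ _ _) (by rwa [Function.update_of_ne hne]),
    sub_add_cancel_left, add_sub_cancel_left, if_pos ⟨neg_mem_dirs hd, hglue⟩, hglue]

lemma hasNullBoundary_of_sTerminal
    (hnull : ∀ (t : T) (d : ℤ × ℤ), d ∈ dirs → 0 < ts.str (ts.glue t d) →
      ∃ t' : T, ts.glue t' (-d) = ts.glue t d)
    (hα : Stable ts α 1) (hterm : STerminal ts 1 α) : HasNullBoundary ts α := by
  intro p t d hp hd hpd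
  by_contra hne
  have hpos := Nat.pos_of_ne_zero hne
  obtain ⟨t', ht'⟩ := hnull t d hd hpos
  refine hterm (p + d) t' hpd ⟨⟨-d, neg_mem_dirs hd, by simp [hp]⟩, ?_⟩
  exact stable_update_of_bond_pos hα hpd (by simp [hp])
    (bond_update_of_glue_eq hp hd ht' ▸ hpos)

lemma bond_update_eq_zero (hα : HasNullBoundary ts α) {q : ℤ × ℤ} (hq : α q = none) (t : T)
    (r : ℤ × ℤ) : bond ts (Function.update α q (some t)) r q = 0 := by
  by_cases hrq : r = q
  · rw [hrq, bond_self]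
  cases hr : α r with
  | none => simp [bond, Function.update_of_ne hrq, hr]
  | some tr =>
    rw [bond_of_some (by rwa [Function.update_of_ne hrq]) (Function.update_self _ _ _)]
    split_ifs with h
    · exact hα r tr (q - r) hr h.1 (by rwa [add_sub_cancel])
    · rfl

lemma sTerminal_of_hasNullBoundary {τ : ℕ} (hτ : 0 < τ) {D : Finset (ℤ × ℤ)} (hD : IsDom α D)
    (hα : HasNullBoundary ts α) : STerminal ts τ α := by
  rintro p t hp ⟨⟨d, -, hadj⟩, hst⟩
  have hpD : p ∉ D := by simp [← hD p, hp]
  have hcut := hst (insert p D) {p} D (isDom_update_some hD p t) (Finset.insert_eq p D).symm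
    (Finset.disjoint_singleton_left.mpr hpD) (Finset.singleton_nonempty p)
    ⟨p + d, (hD _).mp hadj⟩
  have hzero : strengthBetween ts (Function.update α p (some t)) {p} D = 0 := by
    simp only [strengthBetween, Finset.sum_singleton, bond_comm p, bond_update_eq_zero hα hp,
      Finset.sum_const_zero]
  omega

lemma SProducible.stable {σ : Assembly T} {τ : ℕ} (hσ : Stable ts σ τ)
    (h : SProducible ts σ τ α) : Stable ts α τ := by
  induction h with
  | seed => exact hσ
  | attach _ _ _ _ _ hstab => exact hstab

lemma SProducible.exists_isDom {σ : Assembly T} {τ : ℕ} {Dσ : Finset (ℤ × ℤ)}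
    (hσ : IsDom σ Dσ) (h : SProducible ts σ τ α) : ∃ D, IsDom α D := by
  induction h with
  | seed => exact ⟨Dσ, hσ⟩
  | attach p t _ _ _ _ ih =>
    obtain ⟨D, hD⟩ := ih
    exact ⟨insert p D, isDom_update_some hD p t⟩

end TileAssembly

theorem seeded_temp1_terminal_iff_null_boundary_general {T : Type}
    (ts : TileSystem T)
    (hnull : ∀ (t : T) (d : ℤ × ℤ), d ∈ dirs → 0 < ts.str (ts.glue t d) →
      ∃ t' : T, ts.glue t' (-d) = ts.glue t d)
    (σ : Assembly T)
    (Dσ : Finset (ℤ × ℤ)) (hσdom : IsDom σ Dσ)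
    (hσstable : Stable ts σ 1)
    (α : Assembly T) (hα : SProducible ts σ 1 α) :
    STerminal ts 1 α ↔
      ∀ (p : ℤ × ℤ) (t : T) (d : ℤ × ℤ), α p = some t → d ∈ dirs →
        α (p + d) = none → ts.str (ts.glue t d) = 0 := by
  obtain ⟨D, hD⟩ := hα.exists_isDom hσdom
  exact ⟨hasNullBoundary_of_sTerminal hnull (hα.stable hσstable),
    sTerminal_of_hasNullBoundary one_pos hD⟩

/-- Suppose `T` has no functionally null glues (every
positive-strength glue appearing in some direction also appears on some tile
type in the opposite direction).  In a seeded system at temperature 1, a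
producible assembly `α` is terminal if and only if every glue on an unbound
side of `α` has strength 0. -/
theorem seeded_temp1_terminal_iff_null_boundary {T : Type} [Fintype T]
    (ts : TileSystem T)
    (hnull : ∀ (t : T) (d : ℤ × ℤ), d ∈ dirs → 0 < ts.str (ts.glue t d) →
      ∃ t' : T, ts.glue t' (-d) = ts.glue t d)
    (σ : Assembly T)
    (Dσ : Finset (ℤ × ℤ)) (hσdom : IsDom σ Dσ) (hσne : Dσ.Nonempty)
    (hσstable : Stable ts σ 1)
    (α : Assembly T) (hα : SProducible ts σ 1 α) :
    STerminal ts 1 α ↔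
      ∀ (p : ℤ × ℤ) (t : T) (d : ℤ × ℤ), α p = some t → d ∈ dirs →
        α (p + d) = none → ts.str (ts.glue t d) = 0 :=
  seeded_temp1_terminal_iff_null_boundary_general ts hnull σ Dσ hσdom hσstable α hα
end
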